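/- Let T > 0, k ≥ 1 an integer, and let a satisfy (HLoc). Define φ_k(t) := √(2/T)·cos(2πkt/T), ψ_k(t) := √(2/T)·sin(2πkt/T), and the coefficients a_k := ∫₀ᵀ a(t)φ_k(t)⁴ dt, b_k := ∫₀ᵀ a(t)φ_k(t)³ψ_k(t) dt, c_k := ∫₀ᵀ a(t)φ_k(t)²ψ_k(t)² dt, d_k := ∫₀ᵀ a(t)φ_k(t)ψ_k(t)³ dt, e_k := ∫₀ᵀ a(t)ψ_k(t)⁴ dt. If a_k = 3c_k, b_k = d_k and a_k = e_k, then a_k + 2b_k > 0 and a_k − 2b_k > 0. -/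

import Mathlib

open MeasureTheory Set Filter

noncomputable section

/-- The periodic eigenvalues `sigma_k = (2*pi*k/T)^2`. -/
def sigmaEV (T : ℝ) (k : ℕ) : ℝ := (2 * Real.pi * (k : ℝ) / T) ^ 2

/-- Hypothesis (HLoc): `a` is `T`-periodic, measurable, essentially bounded on `[0,T]`,
nonnegative a.e. and not a.e. zero. -/
def HLoc (T : ℝ) (a : ℝ → ℝ) : Prop :=
  Function.Periodic a T ∧ Measurable a ∧
    (∃ C : ℝ, ∀ᵐ t ∂(volume.restrict (Set.Icc (0 : ℝ) T)), |a t| ≤ C) ∧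
    (∀ᵐ t ∂(volume.restrict (Set.Icc (0 : ℝ) T)), 0 ≤ a t) ∧
    ¬ (∀ᵐ t ∂(volume.restrict (Set.Icc (0 : ℝ) T)), a t = 0)

/-- The zero set of `t ↦ sin (c*t+d)` is countable, hence null, if `c ≠ 0`. -/
lemma null_sin_zero (c d : ℝ) (hc : c ≠ 0) :
    volume {t : ℝ | Real.sin (c * t + d) = 0} = 0 := by
  have hsub : {t : ℝ | Real.sin (c * t + d) = 0} ⊆
      Set.range (fun n : ℤ => ((n : ℝ) * Real.pi - d) / c) := by
    intro t ht
    rw [Set.mem_setOf_eq, Real.sin_eq_zero_iff] at ht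
    obtain ⟨n, hn⟩ := ht
    refine ⟨n, ?_⟩
    field_simp
    linarith
  exact measure_mono_null hsub ((Set.countable_range _).measure_zero _)

/-- Integrability of `a * h` on `[0,T]` for `a` measurable a.e. bounded and `h`
continuous bounded. -/
lemma integrable_a_mul (T : ℝ) (a h : ℝ → ℝ) (hma : Measurable a)
    (hC : ∃ C : ℝ, ∀ᵐ t ∂(volume.restrict (Set.Icc (0 : ℝ) T)), |a t| ≤ C)
    (hmh : Measurable h) (hB : ∃ B : ℝ, ∀ t, |h t| ≤ B) :
    Integrable (fun t => a t * h t) (volume.restrict (Set.Icc (0 : ℝ) T)) := by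
  obtain ⟨C, hC⟩ := hC
  have hinta : Integrable a (volume.restrict (Set.Icc (0 : ℝ) T)) := by
    refine Integrable.mono' (integrable_const C) hma.aestronglyMeasurable ?_
    filter_upwards [hC] with t ht
    simpa [Real.norm_eq_abs] using ht
  have : Integrable (fun t => h t * a t) (volume.restrict (Set.Icc (0 : ℝ) T)) := by
    obtain ⟨B, hB⟩ := hB
    refine hinta.bdd_mul (c := B) hmh.aestronglyMeasurable ?_
    exact Filter.Eventually.of_forall (fun t => by simpa [Real.norm_eq_abs] using hB t)
  simpa [mul_comm] using this

/-- Positivity of `∫ a * g` when `a ≥ 0` a.e., not a.e. zero, `g ≥ 0` with null zero set. -/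
lemma pos_integral (T : ℝ) (a g : ℝ → ℝ)
    (hma : Measurable a)
    (hC : ∃ C : ℝ, ∀ᵐ t ∂(volume.restrict (Set.Icc (0 : ℝ) T)), |a t| ≤ C)
    (ha0 : ∀ᵐ t ∂(volume.restrict (Set.Icc (0 : ℝ) T)), 0 ≤ a t)
    (hane : ¬ (∀ᵐ t ∂(volume.restrict (Set.Icc (0 : ℝ) T)), a t = 0))
    (hmg : Measurable g) (hg0 : ∀ t, 0 ≤ g t)
    (hgB : ∃ B : ℝ, ∀ t, |g t| ≤ B)
    (hgz : volume {t : ℝ | g t = 0} = 0) :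
    0 < ∫ t in Set.Icc (0 : ℝ) T, a t * g t := by
  set μ := volume.restrict (Set.Icc (0 : ℝ) T) with hμ
  have hint : Integrable (fun t => a t * g t) μ := integrable_a_mul T a g hma hC hmg hgB
  have hnn : 0 ≤ᵐ[μ] fun t => a t * g t := by
    filter_upwards [ha0] with t ht
    exact mul_nonneg ht (hg0 t)
  rw [integral_pos_iff_support_of_nonneg_ae hnn hint]
  have h1 : μ {t | a t ≠ 0} ≠ 0 := by
    intro h
    exact hane (by rw [ae_iff]; simpa using h)
  have hsub : {t | a t ≠ 0} ⊆
      Function.support (fun t => a t * g t) ∪ {t | g t = 0} := by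
    intro t ht
    by_cases hgt : g t = 0
    · exact Or.inr hgt
    · exact Or.inl (mul_ne_zero ht hgt)
  have hz : μ {t : ℝ | g t = 0} = 0 :=
    le_antisymm (le_trans (Measure.restrict_le_self _) hgz.le) zero_le
  have hle : μ {t | a t ≠ 0} ≤ μ (Function.support fun t => a t * g t) := by
    calc μ {t | a t ≠ 0} ≤ μ (Function.support (fun t => a t * g t) ∪ {t | g t = 0}) :=
          measure_mono hsub
      _ ≤ μ (Function.support fun t => a t * g t) + μ {t : ℝ | g t = 0} := measure_union_le _ _
      _ = μ (Function.support fun t => a t * g t) := by rw [hz, add_zero]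
  exact lt_of_lt_of_le (pos_iff_ne_zero.mpr h1) hle

theorem statement10 (T : ℝ) (hT : 0 < T) (k : ℕ) (hk : 1 ≤ k)
    (a : ℝ → ℝ) (hA : HLoc T a) (ak bk ck dk ek : ℝ)
    (hak : ak = ∫ t in (0:ℝ)..T,
      a t * (Real.sqrt (2 / T) * Real.cos (2 * Real.pi * (k : ℝ) * t / T)) ^ 4)
    (hbk : bk = ∫ t in (0:ℝ)..T,
      a t * (Real.sqrt (2 / T) * Real.cos (2 * Real.pi * (k : ℝ) * t / T)) ^ 3 *
        (Real.sqrt (2 / T) * Real.sin (2 * Real.pi * (k : ℝ) * t / T)))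
    (hck : ck = ∫ t in (0:ℝ)..T,
      a t * (Real.sqrt (2 / T) * Real.cos (2 * Real.pi * (k : ℝ) * t / T)) ^ 2 *
        (Real.sqrt (2 / T) * Real.sin (2 * Real.pi * (k : ℝ) * t / T)) ^ 2)
    (hdk : dk = ∫ t in (0:ℝ)..T,
      a t * (Real.sqrt (2 / T) * Real.cos (2 * Real.pi * (k : ℝ) * t / T)) *
        (Real.sqrt (2 / T) * Real.sin (2 * Real.pi * (k : ℝ) * t / T)) ^ 3)
    (hek : ek = ∫ t in (0:ℝ)..T,
      a t * (Real.sqrt (2 / T) * Real.sin (2 * Real.pi * (k : ℝ) * t / T)) ^ 4)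
    (h₁ : ak = 3 * ck) (h₂ : bk = dk) (h₃ : ak = ek) :
    0 < ak + 2 * bk ∧ 0 < ak - 2 * bk := by
  obtain ⟨hper, hma, hC, ha0, hane⟩ := hA
  set Q : ℝ → ℝ := fun t => Real.sqrt (2 / T) * Real.cos (2 * Real.pi * (k : ℝ) * t / T)
    with hQdef
  set R : ℝ → ℝ := fun t => Real.sqrt (2 / T) * Real.sin (2 * Real.pi * (k : ℝ) * t / T)
    with hRdef
  set μ := volume.restrict (Set.Icc (0 : ℝ) T) with hμ
  -- basic facts about Q, R
  have hB0 : (0:ℝ) ≤ Real.sqrt (2 / T) := Real.sqrt_nonneg _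
  have hmQ : Measurable Q := by
    apply Measurable.const_mul
    exact (Real.measurable_cos.comp (by fun_prop))
  have hmR : Measurable R := by
    apply Measurable.const_mul
    exact (Real.measurable_sin.comp (by fun_prop))
  have hQb : ∀ t, |Q t| ≤ Real.sqrt (2 / T) := fun t => by
    rw [hQdef, abs_mul, abs_of_nonneg hB0]
    calc Real.sqrt (2 / T) * |Real.cos (2 * Real.pi * (k : ℝ) * t / T)| ≤
        Real.sqrt (2 / T) * 1 := by
          exact mul_le_mul_of_nonneg_left (Real.abs_cos_le_one _) hB0
      _ = Real.sqrt (2 / T) := mul_one _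
  have hRb : ∀ t, |R t| ≤ Real.sqrt (2 / T) := fun t => by
    rw [hRdef, abs_mul, abs_of_nonneg hB0]
    calc Real.sqrt (2 / T) * |Real.sin (2 * Real.pi * (k : ℝ) * t / T)| ≤
        Real.sqrt (2 / T) * 1 := by
          exact mul_le_mul_of_nonneg_left (Real.abs_sin_le_one _) hB0
      _ = Real.sqrt (2 / T) := mul_one _
  -- rewrite interval integrals as integrals over Icc
  have conv : ∀ f : ℝ → ℝ, (∫ t in (0:ℝ)..T, f t) = ∫ t in Set.Icc (0:ℝ) T, f t := by
    intro f
    rw [intervalIntegral.integral_of_le hT.le, integral_Icc_eq_integral_Ioc]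
  rw [conv] at hak hbk hck hdk hek
  -- integrability of the individual terms
  have key : ∀ (i j : ℕ), i + j = 4 →
      Integrable (fun t => a t * (Q t ^ i * R t ^ j)) μ := by
    intro i j hij
    refine integrable_a_mul T a _ hma hC ((hmQ.pow_const i).mul (hmR.pow_const j)) ?_
    refine ⟨Real.sqrt (2 / T) ^ i * Real.sqrt (2 / T) ^ j, fun t => ?_⟩
    rw [abs_mul, abs_pow, abs_pow]
    exact mul_le_mul (pow_le_pow_left₀ (abs_nonneg _) (hQb t) i)
      (pow_le_pow_left₀ (abs_nonneg _) (hRb t) j)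
      (pow_nonneg (abs_nonneg _) j) (pow_nonneg hB0 i)
  -- the two quartic expansions
  have expand : ∀ (s : ℝ) (hs : s = 1 ∨ s = -1),
      ∫ t in Set.Icc (0:ℝ) T, a t * (Q t + s * R t) ^ 4 =
        ak + 4 * s * bk + 6 * ck + 4 * s * dk + ek := by
    intro s hs
    have hs2 : s ^ 2 = 1 := by rcases hs with h | h <;> simp [h]
    have h40 := key 4 0 rfl
    have h31 := key 3 1 rfl
    have h22 := key 2 2 rfl
    have h13 := key 1 3 rfl
    have h04 := key 0 4 rfl
    have i2 : Integrable (fun t => (4*s) * (a t * (Q t ^ 3 * R t ^ 1))) μ := h31.const_mul _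
    have i3 : Integrable (fun t => (6:ℝ) * (a t * (Q t ^ 2 * R t ^ 2))) μ := h22.const_mul _
    have i4 : Integrable (fun t => (4*s) * (a t * (Q t ^ 1 * R t ^ 3))) μ := h13.const_mul _
    have hptw : (fun t => a t * (Q t + s * R t) ^ 4) =
        (fun t => (((a t * (Q t ^ 4 * R t ^ 0) + (4*s) * (a t * (Q t ^ 3 * R t ^ 1)))
          + (6:ℝ) * (a t * (Q t ^ 2 * R t ^ 2)))
          + (4*s) * (a t * (Q t ^ 1 * R t ^ 3)))
          + a t * (Q t ^ 0 * R t ^ 4)) := by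
      funext t
      have : (Q t + s * R t) ^ 4 = Q t ^ 4 + 4*s*(Q t^3 * R t) + 6*(s^2)*(Q t^2*R t^2)
          + 4*(s^2)*s*(Q t * R t^3) + (s^2)*(s^2)*R t^4 := by ring
      rw [this, hs2]
      ring
    have j2 : Integrable (fun t => a t * (Q t ^ 4 * R t ^ 0)
        + (4*s) * (a t * (Q t ^ 3 * R t ^ 1))) μ := h40.add i2
    have j3 : Integrable (fun t => (a t * (Q t ^ 4 * R t ^ 0)
        + (4*s) * (a t * (Q t ^ 3 * R t ^ 1)))
        + (6:ℝ) * (a t * (Q t ^ 2 * R t ^ 2))) μ := j2.add i3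
    have j4 : Integrable (fun t => ((a t * (Q t ^ 4 * R t ^ 0)
        + (4*s) * (a t * (Q t ^ 3 * R t ^ 1)))
        + (6:ℝ) * (a t * (Q t ^ 2 * R t ^ 2)))
        + (4*s) * (a t * (Q t ^ 1 * R t ^ 3))) μ := j3.add i4
    rw [hptw]
    rw [integral_add j4 h04,
        integral_add j3 i4,
        integral_add j2 i3,
        integral_add h40 i2,
        integral_const_mul, integral_const_mul, integral_const_mul]
    · have e1 : (∫ t in Set.Icc (0:ℝ) T, a t * (Q t ^ 4 * R t ^ 0)) = ak := by
        rw [hak]; congr 1; funext t; ring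
      have e2 : (∫ t in Set.Icc (0:ℝ) T, a t * (Q t ^ 3 * R t ^ 1)) = bk := by
        rw [hbk]; congr 1; funext t; ring
      have e3 : (∫ t in Set.Icc (0:ℝ) T, a t * (Q t ^ 2 * R t ^ 2)) = ck := by
        rw [hck]; congr 1; funext t; ring
      have e4 : (∫ t in Set.Icc (0:ℝ) T, a t * (Q t ^ 1 * R t ^ 3)) = dk := by
        rw [hdk]; congr 1; funext t; ring
      have e5 : (∫ t in Set.Icc (0:ℝ) T, a t * (Q t ^ 0 * R t ^ 4)) = ek := by
        rw [hek]; congr 1; funext t; ring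
      rw [e1, e2, e3, e4, e5]
  -- positivity of each expansion
  have hc0 : (2 * Real.pi * (k : ℝ) / T) ≠ 0 := by
    have hk' : (0:ℝ) < (k : ℝ) := by exact_mod_cast hk
    positivity
  have hB4 : ∃ B : ℝ, ∀ t, |(Q t + (1:ℝ) * R t) ^ 4| ≤ B := by
    refine ⟨(2 * Real.sqrt (2/T)) ^ 4, fun t => ?_⟩
    rw [abs_pow]
    refine pow_le_pow_left₀ (abs_nonneg _) ?_ 4
    calc |Q t + 1 * R t| ≤ |Q t| + |1 * R t| := abs_add_le _ _
      _ ≤ Real.sqrt (2/T) + Real.sqrt (2/T) := by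
          rw [one_mul]; exact add_le_add (hQb t) (hRb t)
      _ = 2 * Real.sqrt (2/T) := by ring
  have hB4' : ∃ B : ℝ, ∀ t, |(Q t + (-1:ℝ) * R t) ^ 4| ≤ B := by
    refine ⟨(2 * Real.sqrt (2/T)) ^ 4, fun t => ?_⟩
    rw [abs_pow]
    refine pow_le_pow_left₀ (abs_nonneg _) ?_ 4
    calc |Q t + (-1) * R t| ≤ |Q t| + |(-1) * R t| := abs_add_le _ _
      _ ≤ Real.sqrt (2/T) + Real.sqrt (2/T) := by
          rw [neg_one_mul, abs_neg]; exact add_le_add (hQb t) (hRb t)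
      _ = 2 * Real.sqrt (2/T) := by ring
  have hsqrtpos : (0:ℝ) < Real.sqrt (2 / T) := by
    apply Real.sqrt_pos.mpr; positivity
  -- zero set of Q + s R is null
  have hzero : ∀ s : ℝ, (s = 1 ∨ s = -1) →
      volume {t : ℝ | (Q t + s * R t) ^ 4 = 0} = 0 := by
    intro s hs
    have hsub : {t : ℝ | (Q t + s * R t) ^ 4 = 0} ⊆
        {t : ℝ | Real.sin ((s * (2 * Real.pi * (k:ℝ) / T)) * t + Real.pi/4) = 0} := by
      intro t ht
      rw [Set.mem_setOf_eq, pow_eq_zero_iff (by norm_num)] at ht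
      have hcs : Real.cos (2 * Real.pi * (k:ℝ) * t / T)
          + s * Real.sin (2 * Real.pi * (k:ℝ) * t / T) = 0 := by
        have : Real.sqrt (2/T) * (Real.cos (2 * Real.pi * (k:ℝ) * t / T)
            + s * Real.sin (2 * Real.pi * (k:ℝ) * t / T)) = 0 := by
          simp only [hQdef, hRdef] at ht
          linear_combination ht
        rcases mul_eq_zero.mp this with h | h
        · exact absurd h hsqrtpos.ne'
        · exact h
      rw [Set.mem_setOf_eq]
      have harg : (s * (2 * Real.pi * (k:ℝ) / T)) * t = s * (2 * Real.pi * (k:ℝ) * t / T) := by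
        ring
      rw [harg, Real.sin_add, Real.sin_pi_div_four, Real.cos_pi_div_four]
      have hsin : Real.sin (s * (2 * Real.pi * (k:ℝ) * t / T))
          = s * Real.sin (2 * Real.pi * (k:ℝ) * t / T) := by
        rcases hs with h | h <;> simp [h]
      have hcos : Real.cos (s * (2 * Real.pi * (k:ℝ) * t / T))
          = Real.cos (2 * Real.pi * (k:ℝ) * t / T) := by
        rcases hs with h | h <;> simp [h]
      rw [hsin, hcos]
      linear_combination (Real.sqrt 2 / 2) * hcs
    refine measure_mono_null hsub (null_sin_zero _ _ ?_)
    rcases hs with h | h <;> simp [h, hc0]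
  -- conclude
  have hpos : ∀ s : ℝ, (s = 1 ∨ s = -1) →
      0 < ∫ t in Set.Icc (0:ℝ) T, a t * (Q t + s * R t) ^ 4 := by
    intro s hs
    refine pos_integral T a (fun t => (Q t + s * R t) ^ 4) hma hC ha0 hane
      (((hmQ.add (hmR.const_mul s)).pow_const 4)) (fun t => by positivity) ?_ (hzero s hs)
    rcases hs with h | h
    · subst h; exact hB4
    · subst h; exact hB4'
  have hp1 := hpos 1 (Or.inl rfl)
  have hp2 := hpos (-1) (Or.inr rfl)
  rw [expand 1 (Or.inl rfl)] at hp1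
  rw [expand (-1) (Or.inr rfl)] at hp2
  constructor <;> nlinarith [hp1, hp2]
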